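/- arXiv:2010.14718 — 3 statements merged into one kernel-verified Lean document; each statement's English description precedes it below -/
import Mathlib

section
/- In the adversarial instance where the agent's utilities are y(ω₀) = y(ω₁) = 0 and y(ω₂) = 1 (with principal utilities x(ω₁) = 1/ε occurring with probability ε, x(ω₀) = 0 with probability 1−ε on element 1, and x(ω₂) = 1 always on element 2), every lottery mechanism of the form described yields the principal expected utility at most 1, so the delegation gap is at most 1/(2 − ε). -/
theorem principal_utility_lotteryB_eq_one {ε : ℝ} (hε : ε ≠ 0) (b : ℝ) :
    ε * (b + (1 - b) / ε) + (1 - ε) * b = 1 := by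
  field_simp
  ring

/-- In the adversarial instance (agent utilities `y(ω₀) = y(ω₁) = 0`, `y(ω₂) = 1`;
principal gets `1/ε` from `ω₁` with probability `ε`, else `0` from element 1, and `1`
from element 2), every lottery mechanism — lottery `A` giving `ω₂` w.p. `a` and `ω₀`
w.p. `1 − a`, lottery `B` giving `ω₂` w.p. `b` and `ω₁` w.p. `1 − b` — yields the
principal expected utility at most `1`: the agent proposes `B` iff `b ≥ a`, giving
`ε(b + (1−b)/ε) + (1−ε)b`, else `A`, giving `a`. Hence the delegation gap is at most
`1/(2 − ε)` since the non-delegated optimum is `2 − ε`. -/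
theorem lottery_mechanisms_at_most_one (ε : ℝ) (hε0 : 0 < ε) (hε1 : ε < 1) :
    ∀ a b : ℝ, 0 ≤ a → a ≤ 1 → 0 ≤ b → b ≤ 1 →
      (if b ≥ a then ε * (b + (1 - b) / ε) + (1 - ε) * b else ε * a + (1 - ε) * a) ≤ 1 ∧
      (if b ≥ a then ε * (b + (1 - b) / ε) + (1 - ε) * b else ε * a + (1 - ε) * a) / (2 - ε)
        ≤ 1 / (2 - ε) := by
  intro a b _ ha1 _ _
  have hle : (if b ≥ a then ε * (b + (1 - b) / ε) + (1 - ε) * b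
      else ε * a + (1 - ε) * a) ≤ 1 := by
    split_ifs
    · exact (principal_utility_lotteryB_eq_one hε0.ne' b).le
    · linarith
  exact ⟨hle, div_le_div_of_nonneg_right hle (by linarith)⟩
end

section
/- For any signaling mechanism M = (Σ, ψ) and corresponding agent best response (p, τ), the single-proposal mechanism M' with acceptable set R = ψ(Σ) and agent strategy (p, τ' = ψ ∘ τ) satisfies: (i) ψ ∘ τ ∘ σ_p = ψ' ∘ τ' ∘ σ_p as functions of the state, and (ii) (p, τ') is a best response of the agent to M', where best response means maximizing expected agent utility over states drawn from the prior μ. -/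
open scoped Classical ENNReal

/-!
A proposal accepted by the single-proposal mechanism is some `ψ a`, and a rejected one yields
`⊥`, worth nothing to the agent. So every agent strategy against the single-proposal mechanism
is matched, state by state, by a signaling strategy against `(Sig, ψ)`, whose value is at most
that of the best response `(p, τ)`; and `ψ ∘ τ` is always accepted, so it reproduces `(p, τ)`.
-/

section SingleProposal

variable {Ψ Sig : Type*} {ψ : Sig → Ψ} {ψ' : Ψ → Ψ} {bot : Ψ}

theorem singleProposal_apply_self
    (hψ' : ∀ R : Ψ, ψ' R = if R ∈ Set.range ψ then R else bot) (a : Sig) :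
    ψ' (ψ a) = ψ a := by
  rw [hψ', if_pos (Set.mem_range_self a)]

theorem exists_signal_strategy_of_singleProposal {α : Type*}
    (hψ' : ∀ R : Ψ, ψ' R = if R ∈ Set.range ψ then R else bot)
    (fallback : α → Sig) (f : α → Ψ) :
    ∃ g : α → Sig, ∀ x, ψ' (f x) = bot ∨ ψ' (f x) = ψ (g x) := by
  refine ⟨fun x => if h : f x ∈ Set.range ψ then h.choose else fallback x, fun x => ?_⟩
  rw [hψ']
  by_cases h : f x ∈ Set.range ψ
  · simp only [if_pos h, dif_pos h, h.choose_spec, or_true]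
  · simp only [if_neg h, true_or]

end SingleProposal

/-- Single-proposal mechanisms are as powerful as signaling mechanisms: given a signaling
mechanism `(Sig, ψ)` and an agent best response `(p, τ)`, the single-proposal mechanism
with acceptable set `R = ψ(Sig)` (mapping a proposal to itself if it lies in `R` and to
the null solution `⊥` otherwise) together with the agent strategy `(p, τ' = ψ ∘ τ)`
satisfies: (i) it induces the same solution in every state, and (ii) `(p, τ')` is a best
response of the agent to the single-proposal mechanism, where the agent's objective is
his expected utility `E_{s ∼ μ}[y_{s,p}(·)]` over states drawn from the prior `μ`. -/
theorem single_proposal_suffices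
    {S Ψ P Str Sig : Type*} (μ : PMF S)
    (σ : P → S → Str)
    (y : S → P → Ψ → NNReal)
    (bot : Ψ) (hbot : ∀ s p, y s p bot = 0)
    (ψ : Sig → Ψ) (p : P) (τ : Str → Sig)
    (hbest : ∀ (p' : P) (τ₂ : Str → Sig),
      (∑' s, (μ s) * (y s p' (ψ (τ₂ (σ p' s))) : ℝ≥0∞))
        ≤ ∑' s, (μ s) * (y s p (ψ (τ (σ p s))) : ℝ≥0∞))
    (ψ' : Ψ → Ψ) (hψ' : ∀ R : Ψ, ψ' R = if R ∈ Set.range ψ then R else bot)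
    (τ' : Str → Ψ) (hτ' : τ' = ψ ∘ τ) :
    (∀ s : S, ψ (τ (σ p s)) = ψ' (τ' (σ p s))) ∧
    (∀ (p' : P) (τ₂ : Str → Ψ),
      (∑' s, (μ s) * (y s p' (ψ' (τ₂ (σ p' s))) : ℝ≥0∞))
        ≤ ∑' s, (μ s) * (y s p (ψ' (τ' (σ p s))) : ℝ≥0∞)) := by
  have same_outcome : ∀ str, ψ' (τ' str) = ψ (τ str) := fun str => by
    rw [hτ', Function.comp_apply, singleProposal_apply_self hψ']
  refine ⟨fun s => (same_outcome (σ p s)).symm, fun p' τ₂ => ?_⟩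
  obtain ⟨τ₂', hτ₂'⟩ := exists_signal_strategy_of_singleProposal hψ' τ τ₂
  have dominated : ∀ s, y s p' (ψ' (τ₂ (σ p' s))) ≤ y s p' (ψ (τ₂' (σ p' s))) := fun s => by
    rcases hτ₂' (σ p' s) with rejected | accepted
    · simp only [rejected, hbot, zero_le]
    · rw [accepted]
  calc (∑' s, (μ s) * (y s p' (ψ' (τ₂ (σ p' s))) : ℝ≥0∞))
      ≤ ∑' s, (μ s) * (y s p' (ψ (τ₂' (σ p' s))) : ℝ≥0∞) :=
        ENNReal.tsum_le_tsum fun s => by gcongr; exact dominated s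
    _ ≤ ∑' s, (μ s) * (y s p (ψ (τ (σ p s))) : ℝ≥0∞) := hbest p' τ₂'
    _ = ∑' s, (μ s) * (y s p (ψ' (τ' (σ p s))) : ℝ≥0∞) := by simp only [same_outcome]
end

section
/- In the deterministic-mechanism analysis of the instance with ω₁ = (element 1, x = 1/ε, y arbitrary, prob ε), ω₀ = (element 1, x = 0, prob 1−ε), ω₂ = (element 2, x = 1, y = 1, prob 1): for every deterministic policy R ⊆ {∅, {ω₀}, {ω₁}, {ω₂}} under a 1-uniform inner constraint, when the agent with utilities y(ω₀) = 0, y(ω₂) = 1, and y(ω₁) ≤ 1 proposes his favorite acceptable realized singleton, the principal's expected utility is at most 1. -/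
theorem deterministic_policies_at_most_one_general
    (ε y₁ : ℝ) (hε0 : 0 < ε) (hy1 : y₁ < 1)
    (r₁ r₂ : Bool)
    (highUtil lowUtil : ℝ)
    -- with probability ε the realized outcomes are {ω₁, ω₂}:
    (hHigh : highUtil =
      if r₁ ∧ r₂ then (if y₁ > 1 then 1 / ε else 1)
      else if r₁ then 1 / ε
      else if r₂ then 1
      else 0)
    -- with probability 1 − ε the realized outcomes are {ω₀, ω₂} (x(ω₀) = 0):
    (hLow : lowUtil = if r₂ then 1 else 0) :
    ε * highUtil + (1 - ε) * lowUtil ≤ 1 := by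
  have hω₂_preferred : ¬ y₁ > 1 := not_lt.mpr hy1.le
  subst hHigh hLow
  -- Each of the four policies yields exactly `0` or `1`; accepting `ω₁` alone gives `ε · (1/ε)`.
  cases r₁ <;> cases r₂ <;> simp [hω₂_preferred, hε0.ne']

/-- Deterministic-mechanism analysis of the hard instance: element 1 yields `ω₁`
(principal utility `1/ε`, agent utility `y₁ ∈ [0,1)`) with probability `ε` and `ω₀`
(principal utility `0`, agent utility `0`) otherwise; element 2 always yields `ω₂`
(utilities `1, 1`). A deterministic policy accepts a subset of the singletons, encoded
by Booleans `r₀, r₁, r₂`. The agent proposes, among realized acceptable singletons, one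
maximizing his utility (`y(ω₂) = 1 > y₁ ≥ 0 = y(ω₀)`), and the principal receives its
`x`-value (or `0` if nothing acceptable is realized). For every such policy the
principal's expected utility is at most `1`. -/
theorem deterministic_policies_at_most_one
    (ε y₁ : ℝ) (hε0 : 0 < ε) (hε1 : ε < 1) (hy0 : 0 ≤ y₁) (hy1 : y₁ < 1)
    (r₀ r₁ r₂ : Bool)
    (highUtil lowUtil : ℝ)
    -- with probability ε the realized outcomes are {ω₁, ω₂}:
    (hHigh : highUtil =
      if r₁ ∧ r₂ then (if y₁ > 1 then 1 / ε else 1)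
      else if r₁ then 1 / ε
      else if r₂ then 1
      else 0)
    -- with probability 1 − ε the realized outcomes are {ω₀, ω₂} (x(ω₀) = 0):
    (hLow : lowUtil = if r₂ then 1 else 0) :
    ε * highUtil + (1 - ε) * lowUtil ≤ 1 :=
  deterministic_policies_at_most_one_general ε y₁ hε0 hy1 r₁ r₂ highUtil lowUtil hHigh hLow
end
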